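/- With notation as above, one has in F[[z,z⁻¹]]: (G⁺₁₁(zq⁻²)² - G⁻₁₁(z⁻¹q²)²)/(q-q⁻¹)² = (2q⁻²[2]_q/(q-q⁻¹))·δ(z) + [2]_q²·δ'(z). -/

import Mathlib

open PowerSeries

/-- The quantum integer `[n]_q = (qⁿ - q⁻ⁿ)/(q - q⁻¹)` in `F = K(q)`, `q = X`. -/
noncomputable def qnum (K : Type*) [Field K] (n : ℤ) : RatFunc K :=
  ((RatFunc.X : RatFunc K) ^ n - (RatFunc.X : RatFunc K) ^ (-n)) /
    ((RatFunc.X : RatFunc K) - (RatFunc.X : RatFunc K)⁻¹)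

/-- The power series `G⁺` attached to a Cartan integer `c`, i.e. the expansion of
`(zq^{-c}-1)/(z - q^{-c})` at `z = 0`; the expansion `G⁻` at `∞` (in the variable `z⁻¹`)
is `Gser K (-c)`.  In type `ȧ₁`, `G^±₁₀ = Gser K (∓2)` and `G^±₁₁ = Gser K (±2)`. -/
noncomputable def Gser (K : Type*) [Field K] (c : ℤ) : PowerSeries (RatFunc K) :=
  PowerSeries.mk fun m =>
    if m = 0 then (RatFunc.X : RatFunc K) ^ c
    else ((RatFunc.X : RatFunc K) - (RatFunc.X : RatFunc K)⁻¹) * qnum K c *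
      (RatFunc.X : RatFunc K) ^ (c * (m : ℤ))

/-!
After the substitution `z ↦ z q^{-c}` the series `G⁺` has constant term `q^c` and all higher
coefficients equal to `q^c - q^{-c}`, so it is `q^{-c} + (q^c - q^{-c})/(1 - z)`, and the
coefficient of `zⁿ` in its square is `[n = 0] q^{-2c} + 2q^{-c}(q^c - q^{-c}) + (q^c - q^{-c})²(n+1)`.
Taking `c = 2` for `G⁺₁₁` and `c = -2` for `G⁻₁₁`, both sides become rational functions of
`x = q²` alone once multiplied by `(q - q⁻¹)²`, and the three cases `m < 0`, `m = 0`, `m > 0`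
are identities in `x`.
-/

namespace PowerSeries

variable {R : Type*} [CommRing R]

theorem coeff_mk_one_sq (n : ℕ) : coeff n ((mk 1 : R⟦X⟧) ^ 2) = (n + 1 : R) := by
  rw [show 2 = 1 + 1 from rfl, mk_one_pow_eq_mk_choose_add, coeff_mk]
  simp [add_comm]

theorem mk_ite_zero_eq (c₀ a : R) :
    (mk fun k => if k = 0 then c₀ else a) = C (c₀ - a) + C a * mk 1 := by
  ext n
  simp only [coeff_mk, map_add, coeff_C, coeff_C_mul, Pi.one_apply, mul_one]
  split <;> ring

theorem coeff_mk_ite_zero_sq (c₀ a : R) (n : ℕ) :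
    coeff n ((mk fun k => if k = 0 then c₀ else a) ^ 2) =
      (if n = 0 then (c₀ - a) ^ 2 else 0) + 2 * (c₀ - a) * a + a ^ 2 * (n + 1) := by
  have hsq : (C (c₀ - a) + C a * mk 1 : R⟦X⟧) ^ 2 =
      C ((c₀ - a) ^ 2) + C (2 * (c₀ - a) * a) * mk 1 + C (a ^ 2) * mk 1 ^ 2 := by
    simp only [map_pow, map_mul, map_ofNat]
    ring
  rw [mk_ite_zero_eq, hsq]
  simp only [map_add, coeff_C, coeff_C_mul, coeff_mk, Pi.one_apply, mul_one, coeff_mk_one_sq]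

end PowerSeries

section QuantumParameter

variable (K : Type*) [Field K]

local notation "q" => (RatFunc.X : RatFunc K)

theorem X_sub_X_inv_ne_zero : q - q⁻¹ ≠ 0 := by
  have hsq : q ^ 2 - 1 ≠ 0 := by
    simpa [RatFunc.algebraMap_X] using
      RatFunc.algebraMap_ne_zero (Polynomial.X_pow_sub_C_ne_zero two_pos (1 : K))
  contrapose! hsq
  rw [sub_eq_zero] at hsq ⊢
  rw [sq]
  nth_rw 2 [hsq]
  exact mul_inv_cancel₀ RatFunc.X_ne_zero

theorem X_sub_X_inv_mul_qnum (n : ℤ) : (q - q⁻¹) * qnum K n = q ^ n - q ^ (-n) :=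
  mul_div_cancel₀ _ (X_sub_X_inv_ne_zero K)

theorem rescale_Gser (c : ℤ) :
    rescale (q ^ (-c)) (Gser K c) = mk fun k => if k = 0 then q ^ c else q ^ c - q ^ (-c) := by
  ext n
  rw [coeff_rescale, Gser, coeff_mk, coeff_mk]
  split_ifs with hn
  · simp [hn]
  · rw [X_sub_X_inv_mul_qnum, ← zpow_natCast, ← zpow_mul, mul_comm, mul_assoc,
      ← zpow_add₀ RatFunc.X_ne_zero]
    simp

theorem coeff_rescale_Gser_sq (c : ℤ) (n : ℕ) :
    coeff n ((rescale (q ^ (-c)) (Gser K c)) ^ 2) =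
      (if n = 0 then (q ^ (-c)) ^ 2 else 0) + 2 * q ^ (-c) * (q ^ c - q ^ (-c)) +
        (q ^ c - q ^ (-c)) ^ 2 * (n + 1) := by
  rw [rescale_Gser, coeff_mk_ite_zero_sq, sub_sub_cancel]

end QuantumParameter

/-- Stated coefficientwise: the coefficient of `z^m` is `1` in `δ(z)` and `m + 1` in `δ'(z)`. -/
theorem stmt17_general {K : Type*} [Field K] (m : ℤ) :
    ((if 0 ≤ m then
        PowerSeries.coeff m.toNat
          ((PowerSeries.rescale ((RatFunc.X : RatFunc K) ^ (-2 : ℤ)) (Gser K 2)) ^ 2)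
      else 0) -
      (if m ≤ 0 then
        PowerSeries.coeff (-m).toNat
          ((PowerSeries.rescale ((RatFunc.X : RatFunc K) ^ (2 : ℤ)) (Gser K (-2))) ^ 2)
      else 0)) /
      ((RatFunc.X : RatFunc K) - (RatFunc.X : RatFunc K)⁻¹) ^ 2 =
    2 * (RatFunc.X : RatFunc K) ^ (-2 : ℤ) * qnum K 2 /
        ((RatFunc.X : RatFunc K) - (RatFunc.X : RatFunc K)⁻¹) +
      qnum K 2 ^ 2 * ((m + 1 : ℤ) : RatFunc K) := by
  have hminus := coeff_rescale_Gser_sq K (-2)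
  rw [neg_neg] at hminus
  rw [coeff_rescale_Gser_sq, hminus, qnum]
  simp only [zpow_neg]
  have hx : (RatFunc.X : RatFunc K) ^ (2 : ℤ) ≠ 0 := zpow_ne_zero _ RatFunc.X_ne_zero
  have hd := X_sub_X_inv_ne_zero K
  generalize (RatFunc.X : RatFunc K) ^ (2 : ℤ) = x at hx ⊢
  generalize (RatFunc.X : RatFunc K) - (RatFunc.X : RatFunc K)⁻¹ = d at hd ⊢
  rcases lt_trichotomy m 0 with hm | rfl | hm
  · have hcast : (((-m).toNat : ℕ) : RatFunc K) = -m := by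
      rw [← Int.cast_natCast, Int.toNat_of_nonneg (by omega), Int.cast_neg]
    rw [if_neg (by omega), if_pos hm.le, if_neg (by omega), hcast]
    field_simp
    push_cast
    ring
  · simp only [le_refl, if_true, Int.toNat_zero, neg_zero, Nat.cast_zero]
    field_simp
    ring
  · have hcast : ((m.toNat : ℕ) : RatFunc K) = m := by
      rw [← Int.cast_natCast, Int.toNat_of_nonneg hm.le]
    rw [if_pos hm.le, if_neg (by omega), if_neg (by omega), hcast]
    field_simp
    push_cast
    ring

/-- Proposition A.5.ii of the paper.  In `F[[z,z⁻¹]]`: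
`(G⁺₁₁(zq⁻²)² - G⁻₁₁(z⁻¹q²)²)/(q-q⁻¹)² = (2q⁻²[2]_q/(q-q⁻¹))·δ(z) + [2]_q²·δ'(z)`,
stated coefficientwise: the coefficient of `z^m` in `δ(z)` is `1` and in `δ'(z)` it is
`m+1`; the squares are taken in `F[[z]]` resp. `F[[z⁻¹]]`. -/
theorem stmt17 {K : Type*} [Field K] [CharZero K] (m : ℤ) :
    ((if 0 ≤ m then
        PowerSeries.coeff m.toNat
          ((PowerSeries.rescale ((RatFunc.X : RatFunc K) ^ (-2 : ℤ)) (Gser K 2)) ^ 2)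
      else 0) -
      (if m ≤ 0 then
        PowerSeries.coeff (-m).toNat
          ((PowerSeries.rescale ((RatFunc.X : RatFunc K) ^ (2 : ℤ)) (Gser K (-2))) ^ 2)
      else 0)) /
      ((RatFunc.X : RatFunc K) - (RatFunc.X : RatFunc K)⁻¹) ^ 2 =
    2 * (RatFunc.X : RatFunc K) ^ (-2 : ℤ) * qnum K 2 /
        ((RatFunc.X : RatFunc K) - (RatFunc.X : RatFunc K)⁻¹) +
      qnum K 2 ^ 2 * ((m + 1 : ℤ) : RatFunc K) :=
  stmt17_general m
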